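/- Let p ≥ 1, u ≥ 1 be real numbers, v > 2 a real number and δ ∈ ℂ \ {0}. If (1/E_{u,v}(p)) [ (1/u²)(E_{u,v−2}(p) − 1/Γ(v−2)) + ((3−2v)/u² + (1+|δ|)/u)(E_{u,v−1}(p) − 1/Γ(v−1)) + ((1−v)²/u² + (1+|δ|)(1−v)/u + |δ|)(E_{u,v}(p) − 1/Γ(v)) ] ≤ |δ|, then the function ℱ(p,u,v)(z) = z + Σ_{s=2}^∞ (p^{s−1}/(E_{u,v}(p) Γ(u(s−1)+v))) z^s is convex of complex order δ, i.e. Re{1 + (1/δ)(z ℱ''(z)/ℱ'(z))} > 0 for all z in the open unit disc. -/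

import Mathlib

open Metric

/-- The Mittag-Leffler function `E_{u,v}(p) = ∑_{n=0}^∞ p^n / Γ(un+v)`. -/
noncomputable def mlE (u v p : ℝ) : ℝ := ∑' n : ℕ, p ^ n / Real.Gamma (u * n + v)

/-- The Mittag-Leffler-type Poisson distribution series
`ℱ(p,u,v)(z) = z + ∑_{s=2}^∞ (p^{s-1}/(E_{u,v}(p) Γ(u(s-1)+v))) z^s`. -/
noncomputable def mlF (p u v : ℝ) (z : ℂ) : ℂ :=
  z + ∑' s : ℕ, ((p ^ (s + 1) / (mlE u v p * Real.Gamma (u * (s + 1) + v)) : ℝ) : ℂ) * z ^ (s + 2)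

lemma gmono : MonotoneOn Real.Gamma (Set.Ici 2) := Real.Gamma_strictMonoOn_Ici.monotoneOn

lemma summable_ml (u w p : ℝ) (hu : 1 ≤ u) (hw : 0 < w) (hp : 0 < p) :
    Summable (fun n : ℕ => p ^ n / Real.Gamma (u * n + w)) := by
  rw [← summable_nat_add_iff 2]
  have hfac : Summable (fun n : ℕ => p * (p ^ (n+1) / (n+1).factorial)) :=
    (((summable_nat_add_iff 1).2 (Real.summable_pow_div_factorial p))).mul_left p
  apply Summable.of_nonneg_of_le _ _ hfac
  · intro n
    have h1 : (0:ℝ) < u * (n+2) + w := by positivity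
    positivity
  · intro n
    push_cast
    have h2 : ((n:ℝ) + 2) ≤ u * (n + 2) + w := by nlinarith [Nat.cast_nonneg (α := ℝ) n]
    have hmem1 : ((n:ℝ) + 2) ∈ Set.Ici (2:ℝ) := Set.mem_Ici.2 (by linarith [Nat.cast_nonneg (α := ℝ) n])
    have hmem2 : u * (n + 2) + w ∈ Set.Ici (2:ℝ) := Set.mem_Ici.2 (le_trans hmem1 h2)
    have hG : Real.Gamma ((n:ℝ)+2) ≤ Real.Gamma (u * (n+2) + w) := gmono hmem1 hmem2 h2
    have hGeq : Real.Gamma ((n:ℝ)+2) = (n+1).factorial := by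
      have h := Real.Gamma_nat_eq_factorial (n+1)
      have h3 : ((n+1:ℕ):ℝ) + 1 = (n:ℝ) + 2 := by push_cast; ring
      rw [h3] at h; rw [h]
    have hGpos : (0:ℝ) < Real.Gamma ((n:ℝ)+2) := by
      rw [hGeq]; positivity
    calc p ^ (n+2) / Real.Gamma (u * ((n:ℝ)+2) + w) ≤ p ^ (n+2) / Real.Gamma ((n:ℝ)+2) := by
          apply div_le_div_of_nonneg_left (by positivity) hGpos hG
      _ = p * (p ^ (n+1) / (n+1).factorial) := by rw [hGeq]; ring

lemma summable_ml_shift (u w p : ℝ) (hu : 1 ≤ u) (hw : 0 < w) (hp : 0 < p) :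
    Summable (fun n : ℕ => p ^ (n + 1) / Real.Gamma (u * ((n : ℝ) + 1) + w)) := by
  have h := (summable_nat_add_iff 1).2 (summable_ml u w p hu hw hp)
  convert h using 2 with n
  · rfl
  push_cast
  ring_nf

lemma tsum_ml_shift (u w p : ℝ) (hu : 1 ≤ u) (hw : 0 < w) (hp : 0 < p) :
    ∑' n : ℕ, p ^ (n + 1) / Real.Gamma (u * ((n : ℝ) + 1) + w)
      = mlE u w p - 1 / Real.Gamma w := by
  have hs := summable_ml u w p hu hw hp
  have h0 := hs.tsum_eq_zero_add
  have hcongr : ∑' n : ℕ, p ^ (n + 1 : ℕ) / Real.Gamma (u * ((n : ℕ) + 1 : ℕ) + w)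
      = ∑' n : ℕ, p ^ (n + 1) / Real.Gamma (u * ((n : ℝ) + 1) + w) := by
    apply tsum_congr; intro n; push_cast; ring_nf
  rw [mlE, h0, ← hcongr]
  simp

lemma mlE_pos (u w p : ℝ) (hu : 1 ≤ u) (hw : 0 < w) (hp : 0 < p) : 0 < mlE u w p := by
  have hs := summable_ml u w p hu hw hp
  refine Summable.tsum_pos hs (fun n => ?_) 0 ?_
  · have : (0:ℝ) < u * n + w := by positivity
    positivity
  · have : (0:ℝ) < u * 0 + w := by positivity
    positivity

lemma hasDerivAt_tsum_pow (a : ℕ → ℂ) (m : ℕ)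
    (ha : Summable fun n : ℕ => ((n + m + 1 : ℕ) : ℝ) * ‖a n‖) {z : ℂ} (hz : ‖z‖ < 1) :
    HasDerivAt (fun w : ℂ => ∑' n, a n * w ^ (n + m + 1))
      (∑' n, a n * (((n : ℂ) + m + 1) * z ^ (n + m))) z := by
  have hz' : z ∈ ball (0 : ℂ) 1 := by simpa [mem_ball_zero_iff] using hz
  have hcast : ∀ n : ℕ, ((n : ℂ) + m + 1) = ((n + m + 1 : ℕ) : ℂ) := by
    intro n; push_cast; ring
  apply hasDerivAt_tsum_of_isPreconnected ha isOpen_ball (convex_ball _ _).isPreconnected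
    (g := fun (n : ℕ) (w : ℂ) => a n * w ^ (n + m + 1))
    (g' := fun (n : ℕ) (w : ℂ) => a n * (((n : ℂ) + m + 1) * w ^ (n + m)))
    (y₀ := 0) ?_ ?_ (mem_ball_self one_pos) ?_ hz'
  · intro n y _
    have h := (hasDerivAt_pow (n + m + 1) y).const_mul (a n)
    simp only [Nat.add_sub_cancel] at h
    convert h using 1
    show a n * (((n:ℂ) + m + 1) * y ^ (n + m)) = _
    rw [hcast]
    rfl
  · intro n y hy
    have hy1 : ‖y‖ < 1 := by simpa [mem_ball_zero_iff] using hy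
    have hpow : ‖y‖ ^ (n + m) ≤ 1 := pow_le_one₀ (norm_nonneg y) hy1.le
    calc ‖a n * (((n : ℂ) + m + 1) * y ^ (n + m))‖
        = ‖a n‖ * (((n + m + 1 : ℕ) : ℝ) * ‖y‖ ^ (n + m)) := by
          rw [norm_mul, norm_mul, norm_pow, hcast, Complex.norm_natCast]
      _ ≤ ‖a n‖ * (((n + m + 1 : ℕ) : ℝ) * 1) := by
          apply mul_le_mul_of_nonneg_left _ (norm_nonneg _)
          apply mul_le_mul_of_nonneg_left hpow (by positivity)
      _ = ((n + m + 1 : ℕ) : ℝ) * ‖a n‖ := by ring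
  · have h0 : (fun n : ℕ => a n * (0 : ℂ) ^ (n + m + 1)) = fun _ => 0 := by
      funext n; simp
    exact h0 ▸ summable_zero

lemma hasDerivAt_tsum_pow_one (a : ℕ → ℂ)
    (ha : Summable fun n : ℕ => ((n:ℝ) + 2) * ‖a n‖) {z : ℂ} (hz : ‖z‖ < 1) :
    HasDerivAt (fun w : ℂ => ∑' n, a n * w ^ (n + 2))
      (∑' n, a n * (((n : ℂ) + 2) * z ^ (n + 1))) z := by
  have ha' : Summable fun n : ℕ => ((n + 1 + 1 : ℕ) : ℝ) * ‖a n‖ :=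
    ha.congr fun n => by push_cast; ring
  have h := hasDerivAt_tsum_pow a 1 ha' hz
  rw [show (∑' n : ℕ, a n * (((n:ℂ) + (1:ℕ) + 1) * z ^ (n + 1)))
      = ∑' n : ℕ, a n * (((n:ℂ) + 2) * z ^ (n + 1)) from
    tsum_congr fun n => by push_cast; ring] at h
  exact h

lemma hasDerivAt_tsum_pow_zero (a : ℕ → ℂ)
    (ha : Summable fun n : ℕ => ((n:ℝ) + 1) * ‖a n‖) {z : ℂ} (hz : ‖z‖ < 1) :
    HasDerivAt (fun w : ℂ => ∑' n, a n * w ^ (n + 1))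
      (∑' n, a n * (((n : ℂ) + 1) * z ^ n)) z := by
  have ha' : Summable fun n : ℕ => ((n + 0 + 1 : ℕ) : ℝ) * ‖a n‖ :=
    ha.congr fun n => by push_cast; ring
  have h := hasDerivAt_tsum_pow a 0 ha' hz
  rw [show (∑' n : ℕ, a n * (((n:ℂ) + (0:ℕ) + 1) * z ^ (n + 0)))
      = ∑' n : ℕ, a n * (((n:ℂ) + 1) * z ^ n) from
    tsum_congr fun n => by push_cast; ring] at h
  exact h

lemma coeff_identity (u v d q n : ℝ) (hu : 1 ≤ u) (hv : 2 < v) (hn : 0 ≤ n) :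
    (n + 2) * ((n + 1) + d) * (q / Real.Gamma (u * (n + 1) + v)) =
      1 / u ^ 2 * (q / Real.Gamma (u * (n + 1) + (v - 2)))
      + ((3 - 2 * v) / u ^ 2 + (1 + d) / u) * (q / Real.Gamma (u * (n + 1) + (v - 1)))
      + ((1 - v) ^ 2 / u ^ 2 + (1 + d) * (1 - v) / u + d) * (q / Real.Gamma (u * (n + 1) + v)) := by
  set X := u * (n + 1) with hX
  have hu0 : 0 < u := by linarith
  have hX1 : 1 ≤ X := by nlinarith
  have h2 : 0 < X + (v - 2) := by linarith
  have h1 : 0 < X + (v - 1) := by linarith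
  have g1 : Real.Gamma (X + (v - 1)) = (X + (v - 2)) * Real.Gamma (X + (v - 2)) := by
    have h := Real.Gamma_add_one h2.ne'
    rw [show X + (v - 2) + 1 = X + (v - 1) by ring] at h
    exact h
  have g2 : Real.Gamma (X + v) = (X + (v - 1)) * Real.Gamma (X + (v - 1)) := by
    have h := Real.Gamma_add_one h1.ne'
    rw [show X + (v - 1) + 1 = X + v by ring] at h
    exact h
  have hΓ : 0 < Real.Gamma (X + (v - 2)) := Real.Gamma_pos_of_pos h2
  rw [g2, g1]
  field_simp
  ring

set_option maxHeartbeats 2000000 in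
/-- **Corollary 4.2**: a sufficient condition for `ℱ(p,u,v)` to be convex of complex
order `δ`. -/
theorem stmt_11 (p u v : ℝ) (hp : 1 ≤ p) (hu : 1 ≤ u) (hv : 2 < v)
    (δ : ℂ) (hδ : δ ≠ 0)
    (hcond : 1 / mlE u v p *
        (1 / u ^ 2 * (mlE u (v - 2) p - 1 / Real.Gamma (v - 2)) +
          ((3 - 2 * v) / u ^ 2 + (1 + ‖δ‖) / u) *
            (mlE u (v - 1) p - 1 / Real.Gamma (v - 1)) +
          ((1 - v) ^ 2 / u ^ 2 + (1 + ‖δ‖) * (1 - v) / u + ‖δ‖) *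
            (mlE u v p - 1 / Real.Gamma v))
        ≤ ‖δ‖) :
    ∀ z ∈ ball (0 : ℂ) 1,
      0 < (1 + (1 / δ) * (z * deriv (deriv (mlF p u v)) z / deriv (mlF p u v) z)).re := by
  intro z hz
  have hz1 : ‖z‖ < 1 := by simpa [mem_ball_zero_iff] using hz
  have hp0 : 0 < p := lt_of_lt_of_le one_pos hp
  have hu0 : 0 < u := lt_of_lt_of_le one_pos hu
  have hv0 : 0 < v := by linarith
  have hv1 : 0 < v - 1 := by linarith
  have hv2 : 0 < v - 2 := by linarith
  set d := ‖δ‖ with hd_def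
  have hd : 0 < d := norm_pos_iff.mpr hδ
  have hE : 0 < mlE u v p := mlE_pos u v p hu hv0 hp0
  set c : ℕ → ℝ := fun n => p ^ (n + 1) / (mlE u v p * Real.Gamma (u * ((n:ℝ) + 1) + v))
    with hc_def
  have hX : ∀ n : ℕ, (1:ℝ) ≤ u * ((n:ℝ) + 1) := fun n => by
    nlinarith [Nat.cast_nonneg (α := ℝ) n]
  have hGpos : ∀ n : ℕ, 0 < Real.Gamma (u * ((n:ℝ) + 1) + v) := fun n =>
    Real.Gamma_pos_of_pos (by nlinarith [hX n])
  have hc_pos : ∀ n, 0 < c n := fun n => by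
    have h1 := hGpos n
    simp only [hc_def]
    positivity
  have hS0 := summable_ml_shift u v p hu hv0 hp0
  have hS1 := summable_ml_shift u (v-1) p hu hv1 hp0
  have hS2 := summable_ml_shift u (v-2) p hu hv2 hp0
  have hpt : ∀ n : ℕ, ((n:ℝ) + 2) * (((n:ℝ) + 1) + d)
        * (p ^ (n+1) / Real.Gamma (u * ((n:ℝ) + 1) + v)) =
      1 / u ^ 2 * (p ^ (n+1) / Real.Gamma (u * ((n:ℝ) + 1) + (v - 2)))
      + ((3 - 2 * v) / u ^ 2 + (1 + d) / u)
          * (p ^ (n+1) / Real.Gamma (u * ((n:ℝ) + 1) + (v - 1)))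
      + ((1 - v) ^ 2 / u ^ 2 + (1 + d) * (1 - v) / u + d)
          * (p ^ (n+1) / Real.Gamma (u * ((n:ℝ) + 1) + v)) :=
    fun n => coeff_identity u v d (p ^ (n+1)) (n:ℝ) hu hv (Nat.cast_nonneg n)
  have hSW : Summable (fun n : ℕ => ((n:ℝ) + 2) * (((n:ℝ) + 1) + d)
      * (p ^ (n+1) / Real.Gamma (u * ((n:ℝ) + 1) + v))) := by
    apply Summable.congr _ (fun n => (hpt n).symm)
    exact ((hS2.mul_left _).add (hS1.mul_left _)).add (hS0.mul_left _)
  have hTW : ∑' n : ℕ, ((n:ℝ) + 2) * (((n:ℝ) + 1) + d)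
        * (p ^ (n+1) / Real.Gamma (u * ((n:ℝ) + 1) + v)) =
      1 / u ^ 2 * (mlE u (v - 2) p - 1 / Real.Gamma (v - 2)) +
        ((3 - 2 * v) / u ^ 2 + (1 + d) / u) * (mlE u (v - 1) p - 1 / Real.Gamma (v - 1)) +
        ((1 - v) ^ 2 / u ^ 2 + (1 + d) * (1 - v) / u + d) * (mlE u v p - 1 / Real.Gamma v) := by
    rw [tsum_congr hpt]
    rw [Summable.tsum_add ((hS2.mul_left _).add (hS1.mul_left _)) (hS0.mul_left _),
        Summable.tsum_add (hS2.mul_left _) (hS1.mul_left _),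
        tsum_mul_left, tsum_mul_left, tsum_mul_left,
        tsum_ml_shift u (v-2) p hu hv2 hp0, tsum_ml_shift u (v-1) p hu hv1 hp0,
        tsum_ml_shift u v p hu hv0 hp0]
  have hc_eq : ∀ n : ℕ, c n = (1 / mlE u v p)
      * (p ^ (n+1) / Real.Gamma (u * ((n:ℝ) + 1) + v)) := by
    intro n
    simp only [hc_def]
    ring
  have hSWc : Summable (fun n : ℕ => ((n:ℝ) + 2) * (((n:ℝ) + 1) + d) * c n) := by
    apply Summable.congr (hSW.mul_left (1 / mlE u v p))
    intro n
    rw [hc_eq n]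
    ring
  have hkey : ∑' n : ℕ, ((n:ℝ) + 2) * (((n:ℝ) + 1) + d) * c n ≤ d := by
    have heq : (fun n : ℕ => ((n:ℝ) + 2) * (((n:ℝ) + 1) + d) * c n)
        = fun n : ℕ => (1 / mlE u v p) * (((n:ℝ) + 2) * (((n:ℝ) + 1) + d)
          * (p ^ (n+1) / Real.Gamma (u * ((n:ℝ) + 1) + v))) := by
      funext n; rw [hc_eq n]; ring
    rw [heq, tsum_mul_left, hTW]
    exact hcond
  have hSA : Summable (fun n : ℕ => ((n:ℝ) + 2) * ((n:ℝ) + 1) * c n) := by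
    apply Summable.of_nonneg_of_le _ _ hSWc
    · intro n; have := (hc_pos n).le; positivity
    · intro n
      have h1 := (hc_pos n).le
      have h2 : (0:ℝ) ≤ (n:ℝ) := Nat.cast_nonneg n
      nlinarith [mul_nonneg (mul_nonneg (by linarith : (0:ℝ) ≤ (n:ℝ) + 2) hd.le) h1]
  have hSB : Summable (fun n : ℕ => ((n:ℝ) + 2) * c n) := by
    apply Summable.of_nonneg_of_le _ _ hSWc
    · intro n; have := (hc_pos n).le; positivity
    · intro n
      have h1 := (hc_pos n).le
      have h2 : (0:ℝ) ≤ (n:ℝ) := Nat.cast_nonneg n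
      nlinarith [mul_nonneg (mul_nonneg (by linarith : (0:ℝ) ≤ (n:ℝ) + 2)
        (by linarith : (0:ℝ) ≤ (n:ℝ) + d)) h1]
  set A := ∑' n : ℕ, ((n:ℝ) + 2) * ((n:ℝ) + 1) * c n with hA_def
  set B := ∑' n : ℕ, ((n:ℝ) + 2) * c n with hB_def
  have hAB : A + d * B ≤ d := by
    have heq : A + d * B = ∑' n : ℕ, ((n:ℝ) + 2) * (((n:ℝ) + 1) + d) * c n := by
      rw [hA_def, hB_def, ← tsum_mul_left (a := d), ← Summable.tsum_add hSA ((hSB).mul_left d)]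
      exact tsum_congr fun n => by ring
    rw [heq]; exact hkey
  have hA0 : 0 < A := by
    refine Summable.tsum_pos hSA (fun n => ?_) 0 ?_
    · have := (hc_pos n).le; positivity
    · have := hc_pos 0; norm_num; linarith
  have hB0 : 0 ≤ B := tsum_nonneg (fun n => by have := (hc_pos n).le; positivity)
  have hB1 : B < 1 := by nlinarith
  -- first derivative
  have hmlF : mlF p u v = fun w : ℂ => w + ∑' n : ℕ, ((c n : ℝ) : ℂ) * w ^ (n + 2) := by
    rw [hc_def]; rfl
  have hSc2 : Summable (fun n : ℕ => ((n:ℝ) + 2) * ‖((c n : ℝ) : ℂ)‖) := by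
    apply Summable.congr hSB
    intro n
    rw [Complex.norm_real, Real.norm_eq_abs, abs_of_nonneg (hc_pos n).le]
  have hder1 : ∀ w ∈ ball (0:ℂ) 1, HasDerivAt (mlF p u v)
      (1 + ∑' n : ℕ, ((c n : ℝ) : ℂ) * (((n : ℂ) + 2) * w ^ (n + 1))) w := by
    intro w hw
    have hw1 : ‖w‖ < 1 := by simpa [mem_ball_zero_iff] using hw
    have h := hasDerivAt_tsum_pow_one (fun n => ((c n : ℝ) : ℂ)) hSc2 hw1
    have h2 := (hasDerivAt_id w).add h
    rw [hmlF]
    exact h2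
  have hd1 : ∀ w ∈ ball (0:ℂ) 1, deriv (mlF p u v) w
      = 1 + ∑' n : ℕ, ((c n : ℝ) : ℂ) * (((n : ℂ) + 2) * w ^ (n + 1)) :=
    fun w hw => (hder1 w hw).deriv
  -- second derivative
  have hna2 : ∀ n : ℕ, ‖((c n : ℝ) : ℂ) * ((n : ℂ) + 2)‖ = ((n:ℝ) + 2) * c n := by
    intro n
    rw [norm_mul, Complex.norm_real, Real.norm_eq_abs, abs_of_nonneg (hc_pos n).le,
      show ((n : ℂ) + 2) = ((n + 2 : ℕ) : ℂ) by push_cast; ring, Complex.norm_natCast]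
    push_cast; ring
  have hSa2 : Summable (fun n : ℕ => ((n:ℝ) + 1) * ‖((c n : ℝ) : ℂ) * ((n : ℂ) + 2)‖) := by
    apply Summable.congr hSA
    intro n
    rw [hna2 n]
    ring
  have hfun_eq : (fun w : ℂ => 1 + ∑' n : ℕ, ((c n : ℝ) : ℂ) * (((n : ℂ) + 2) * w ^ (n + 1)))
      = fun w : ℂ => 1 + ∑' n : ℕ, (((c n : ℝ) : ℂ) * ((n : ℂ) + 2)) * w ^ (n + 1) := by
    funext w
    congr 1
    exact tsum_congr fun n => by ring
  have hder2 : HasDerivAt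
      (fun w : ℂ => 1 + ∑' n : ℕ, ((c n : ℝ) : ℂ) * (((n : ℂ) + 2) * w ^ (n + 1)))
      (∑' n : ℕ, (((c n : ℝ) : ℂ) * ((n : ℂ) + 2)) * (((n : ℂ) + 1) * z ^ n)) z := by
    rw [hfun_eq]
    exact (hasDerivAt_tsum_pow_zero (fun n => ((c n : ℝ) : ℂ) * ((n : ℂ) + 2)) hSa2 hz1).const_add 1
  have hd2 : deriv (deriv (mlF p u v)) z
      = ∑' n : ℕ, (((c n : ℝ) : ℂ) * ((n : ℂ) + 2)) * (((n : ℂ) + 1) * z ^ n) := by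
    have hev : deriv (mlF p u v) =ᶠ[nhds z]
        (fun w : ℂ => 1 + ∑' n : ℕ, ((c n : ℝ) : ℂ) * (((n : ℂ) + 2) * w ^ (n + 1))) :=
      Filter.eventuallyEq_of_mem (isOpen_ball.mem_nhds hz) hd1
    rw [hev.deriv_eq]
    exact hder2.deriv
  -- substitute the derivatives into the goal, then estimate
  rw [hd2, hd1 z hz]
  set D1 : ℂ := ∑' n : ℕ, ((c n : ℝ) : ℂ) * (((n : ℂ) + 2) * z ^ (n + 1)) with hD1_def
  set D2 : ℂ := ∑' n : ℕ, (((c n : ℝ) : ℂ) * ((n : ℂ) + 2)) * (((n : ℂ) + 1) * z ^ n)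
    with hD2_def
  have hn1 : ‖D1‖ ≤ B * ‖z‖ := by
    rw [hD1_def]
    apply tsum_of_norm_bounded (hSB.hasSum.mul_right ‖z‖)
    intro n
    have hzn : ‖z‖ ^ (n + 1) ≤ ‖z‖ := by
      calc ‖z‖ ^ (n + 1) = ‖z‖ ^ n * ‖z‖ := by ring
        _ ≤ 1 * ‖z‖ := by
            apply mul_le_mul_of_nonneg_right (pow_le_one₀ (norm_nonneg z) hz1.le) (norm_nonneg z)
        _ = ‖z‖ := one_mul _
    calc ‖((c n : ℝ) : ℂ) * (((n : ℂ) + 2) * z ^ (n + 1))‖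
        = ((n:ℝ) + 2) * c n * ‖z‖ ^ (n + 1) := by
          rw [show ((c n : ℝ) : ℂ) * (((n : ℂ) + 2) * z ^ (n + 1))
              = (((c n : ℝ) : ℂ) * ((n : ℂ) + 2)) * z ^ (n + 1) by ring,
            norm_mul, hna2 n, norm_pow]
      _ ≤ ((n:ℝ) + 2) * c n * ‖z‖ := by
          apply mul_le_mul_of_nonneg_left hzn
          have := (hc_pos n).le; positivity
  have hn2 : ‖D2‖ ≤ A := by
    rw [hD2_def]
    apply tsum_of_norm_bounded hSA.hasSum
    intro n
    have hzn : ‖z‖ ^ n ≤ 1 := pow_le_one₀ (norm_nonneg z) hz1.le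
    calc ‖(((c n : ℝ) : ℂ) * ((n : ℂ) + 2)) * (((n : ℂ) + 1) * z ^ n)‖
        = ((n:ℝ) + 2) * c n * (((n:ℝ) + 1) * ‖z‖ ^ n) := by
          rw [norm_mul, hna2 n, norm_mul, norm_pow,
            show ((n : ℂ) + 1) = ((n + 1 : ℕ) : ℂ) by push_cast; ring, Complex.norm_natCast]
          push_cast; ring
      _ ≤ ((n:ℝ) + 2) * c n * (((n:ℝ) + 1) * 1) := by
          apply mul_le_mul_of_nonneg_left _ (by have := (hc_pos n).le; positivity)
          apply mul_le_mul_of_nonneg_left hzn (by positivity)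
      _ = ((n:ℝ) + 2) * ((n:ℝ) + 1) * c n := by ring
  have hden : 1 - B * ‖z‖ ≤ ‖1 + D1‖ := by
    have h := norm_sub_norm_le (1 : ℂ) (-D1)
    rw [sub_neg_eq_add, norm_neg, norm_one] at h
    linarith
  have hdenpos : 0 < 1 - B * ‖z‖ := by nlinarith [norm_nonneg z]
  have hnum : ‖z * D2‖ < d * ‖1 + D1‖ := by
    have h1 : ‖z * D2‖ ≤ A * ‖z‖ := by
      rw [norm_mul]
      calc ‖z‖ * ‖D2‖ ≤ ‖z‖ * A := mul_le_mul_of_nonneg_left hn2 (norm_nonneg z)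
        _ = A * ‖z‖ := mul_comm _ _
    have h2 : A * ‖z‖ < d * (1 - B * ‖z‖) := by
      nlinarith [mul_pos (sub_pos.2 hz1) (by nlinarith : (0:ℝ) < A + d * B),
        norm_nonneg z, mul_nonneg hd.le hB0]
    calc ‖z * D2‖ ≤ A * ‖z‖ := h1
      _ < d * (1 - B * ‖z‖) := h2
      _ ≤ d * ‖1 + D1‖ := mul_le_mul_of_nonneg_left hden hd.le
  have hdpos' : 0 < ‖1 + D1‖ := lt_of_lt_of_le hdenpos hden
  have hW : ‖z * D2 / (1 + D1)‖ < d := by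
    rw [norm_div, div_lt_iff₀ hdpos']
    linarith [hnum]
  have hre : (1 + 1 / δ * (z * D2 / (1 + D1))).re = 1 + (1 / δ * (z * D2 / (1 + D1))).re := by
    simp [Complex.add_re]
  rw [hre]
  have h3 : -(‖1 / δ * (z * D2 / (1 + D1))‖) ≤ (1 / δ * (z * D2 / (1 + D1))).re := by
    have h := Complex.abs_re_le_norm (1 / δ * (z * D2 / (1 + D1)))
    exact (abs_le.1 h).1
  have h4 : ‖1 / δ * (z * D2 / (1 + D1))‖ < 1 := by
    rw [norm_mul, norm_div, norm_one]
    have hδn : ‖δ‖ = d := hd_def.symm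
    rw [hδn]
    calc 1 / d * ‖z * D2 / (1 + D1)‖ < 1 / d * d := by
          apply mul_lt_mul_of_pos_left hW (by positivity)
      _ = 1 := by field_simp
  linarith
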